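/- Uniqueness of the achievement point: for every list of actions l, state s0, and predicate φ : State → Prop, there is at most one index j with 1 ≤ j ≤ l.length such that ¬φ (run (l.take (j−1)) s0) and φ (run (l.take k) s0) for all k with j ≤ k ≤ l.length. Hence the action satisfying the achievement condition of Definition 2 at each stage of the causal-chain recursion is unique, and the achievement causal chain of a causal setting is unique. -/
import Mathlib


inductive Loc : Type
  | I | J | K
deriving DecidableEq

open Loc

def connected : Loc → Loc → Prop
  | I, J => True
  | J, I => True
  | J, K => True
  | K, J => True
  | _, _ => False

inductive Act : Type
  | drive (i j : Loc)
  | turn (i : Loc)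
  | hack
deriving DecidableEq

open Act

structure State : Type where
  pos : Loc
  corrupted : Bool
  damaged : Bool

def step : Act → State → State
  | drive _ j, s => ⟨j, s.corrupted, s.damaged⟩
  | turn _, s => ⟨s.pos, s.corrupted, s.corrupted || s.damaged⟩
  | hack, s => ⟨s.pos, true, s.damaged⟩

def poss : Act → State → Prop
  | drive i j, s => s.pos = i ∧ i ≠ j ∧ connected i j
  | turn i, s => s.pos = i
  | hack, _ => True

def run (l : List Act) (s : State) : State :=
  l.foldl (fun t a => step a t) s

def executable (l : List Act) (s : State) : Prop :=
  ∀ k : Fin l.length, poss (l.get k) (run (l.take k) s)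

def σ1 : List Act := [drive I J, turn J, hack, drive J K, turn K]

def S0 : State := ⟨I, false, false⟩

def S0star : State := ⟨I, true, false⟩

def AchCause : List Act → State → (State → Prop) → ℕ → Prop
  | l, s0, φ, i =>
    ∃ j, ∃ _h1 : 1 ≤ j, ∃ _h2 : j ≤ l.length,
      ¬ φ (run (l.take (j - 1)) s0) ∧
      (∀ k, j ≤ k → k ≤ l.length → φ (run (l.take k) s0)) ∧
      (i = j - 1 ∨
        AchCause (l.take (j - 1)) s0
          (fun s => φ (step (l.get ⟨j - 1, by omega⟩) s) ∧
            poss (l.get ⟨j - 1, by omega⟩) s) i)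
  termination_by l _ _ _ => l.length
  decreasing_by simp [List.length_take]; omega

/-- uniqueness of the achievement point: there is at most one index `j`
with `1 ≤ j ≤ l.length` at which the effect `φ` flips from false to true and stays
true until the end of the narrative. -/
theorem achievement_point_unique :
    ∀ (l : List Act) (s0 : State) (φ : State → Prop) (j j' : ℕ),
      (1 ≤ j ∧ j ≤ l.length ∧ ¬ φ (run (l.take (j - 1)) s0) ∧
        (∀ k, j ≤ k → k ≤ l.length → φ (run (l.take k) s0))) →
      (1 ≤ j' ∧ j' ≤ l.length ∧ ¬ φ (run (l.take (j' - 1)) s0) ∧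
        (∀ k, j' ≤ k → k ≤ l.length → φ (run (l.take k) s0))) →
      j = j' := by
  rintro l s0 φ j j' ⟨h1, h2, h3, h4⟩ ⟨h1', h2', h3', h4'⟩
  by_contra hne
  rcases Nat.lt_or_ge j j' with h | h
  · exact h3' (h4 (j' - 1) (by omega) (by omega))
  · exact h3 (h4' (j - 1) (by omega) (by omega))
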